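/- Let M and K be symmetric positive definite real n×n matrices and let α, β, κ > 0 be real parameters. Set A := β M, B := κ K and C := α^{-1} M. Then the second block of the interpolation preconditioner at θ = 1/2 has the explicit form C + [C, B A^{-1} Bᵀ]_{1/2} = α^{-1} M + (α β)^{-1/2} κ K, and this equals (α β)^{-1} (β M + (α β)^{1/2} κ K), i.e. (α β)^{-1} times the first preconditioner block A + [A, Bᵀ C^{-1} B]_{1/2}. -/

import Mathlib

open Matrix

/-- Real power of a real square matrix, via the continuous functional calculus
(spectral decomposition); junk value if the matrix is not selfadjoint. -/
noncomputable def mrpow {n : ℕ} (S : Matrix (Fin n) (Fin n) ℝ) (r : ℝ) :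
    Matrix (Fin n) (Fin n) ℝ :=
  cfc (fun x : ℝ => x ^ r) S

/-- The square root `M^{1/2}`. -/
noncomputable def msqrt {n : ℕ} (S : Matrix (Fin n) (Fin n) ℝ) : Matrix (Fin n) (Fin n) ℝ :=
  mrpow S (1 / 2)

/-- The interpolation `[V, W]_θ := V^{1/2} (V^{-1/2} W V^{-1/2})^θ V^{1/2}`,
where `V^{-1/2}` is the inverse of `V^{1/2}`. -/
noncomputable def interp {n : ℕ} (V W : Matrix (Fin n) (Fin n) ℝ) (θ : ℝ) :
    Matrix (Fin n) (Fin n) ℝ :=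
  msqrt V * mrpow ((msqrt V)⁻¹ * W * (msqrt V)⁻¹) θ * msqrt V

/-!
The key fact is the geometric-mean identity `[V, W V⁻¹ W]_{1/2} = W` for `V` positive definite
and `W` positive semidefinite: with `S = V^{1/2}`, the matrix `S⁻¹ (W V⁻¹ W) S⁻¹` is the square of
the positive semidefinite matrix `S⁻¹ W S⁻¹`, whose square root conjugates back to `W`. Both
preconditioner blocks have this shape, with `W = (α β)^{∓1/2} κ K`.
-/

section

variable {n : ℕ}

lemma msqrt_eq_cfc_sqrt (S : Matrix (Fin n) (Fin n) ℝ) : msqrt S = cfc Real.sqrt S := by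
  simp only [msqrt, mrpow, ← Real.sqrt_eq_rpow]

lemma mul_self_msqrt {V : Matrix (Fin n) (Fin n) ℝ} (hV : V.PosSemidef) :
    msqrt V * msqrt V = V := by
  have hspec := (posSemidef_iff_isHermitian_and_spectrum_nonneg.1 hV).2
  rw [msqrt_eq_cfc_sqrt, ← cfc_mul Real.sqrt Real.sqrt V]
  conv_rhs => rw [← cfc_id' ℝ V hV.isHermitian.isSelfAdjoint]
  exact cfc_congr fun x hx => Real.mul_self_sqrt (hspec hx)

lemma msqrt_mul_self {X : Matrix (Fin n) (Fin n) ℝ} (hX : X.PosSemidef) :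
    msqrt (X * X) = X := by
  have hspec := (posSemidef_iff_isHermitian_and_spectrum_nonneg.1 hX).2
  rw [msqrt_eq_cfc_sqrt, ← sq, ← cfc_comp_pow Real.sqrt 2 X (ha := hX.isHermitian.isSelfAdjoint)]
  conv_rhs => rw [← cfc_id' ℝ X hX.isHermitian.isSelfAdjoint]
  exact cfc_congr fun x hx => Real.sqrt_sq (hspec hx)

lemma isHermitian_msqrt (S : Matrix (Fin n) (Fin n) ℝ) : (msqrt S).IsHermitian :=
  cfc_predicate _ S

lemma isUnit_det_msqrt {V : Matrix (Fin n) (Fin n) ℝ} (hV : V.PosDef) :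
    IsUnit (msqrt V).det := by
  rw [← isUnit_iff_isUnit_det]
  exact isUnit_of_mul_isUnit_left ((mul_self_msqrt hV.posSemidef).symm ▸ hV.isUnit)

theorem interp_half_mul_inv_mul {V W : Matrix (Fin n) (Fin n) ℝ} (hV : V.PosDef)
    (hW : W.PosSemidef) : interp V (W * V⁻¹ * W) (1 / 2) = W := by
  set S := msqrt V
  have hS : IsUnit S.det := isUnit_det_msqrt hV
  have hVinv : V⁻¹ = S⁻¹ * S⁻¹ := by rw [← mul_self_msqrt hV.posSemidef, Matrix.mul_inv_rev]
  have hX : (S⁻¹ * W * S⁻¹).PosSemidef := by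
    have := hW.conjTranspose_mul_mul_same S⁻¹
    rwa [(isHermitian_msqrt V).inv.eq] at this
  calc interp V (W * V⁻¹ * W) (1 / 2)
      = S * msqrt ((S⁻¹ * W * S⁻¹) * (S⁻¹ * W * S⁻¹)) * S := by
        simp only [interp, msqrt, S, hVinv, Matrix.mul_assoc]
    _ = (S * S⁻¹) * W * (S⁻¹ * S) := by
        rw [msqrt_mul_self hX]; simp only [Matrix.mul_assoc]
    _ = W := by rw [mul_nonsing_inv S hS, nonsing_inv_mul S hS, Matrix.one_mul, Matrix.mul_one]

end

lemma smul_mul_inv_smul_mul_smul {m 𝕜 : Type*} [Fintype m] [DecidableEq m] [Field 𝕜]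
    {M : Matrix m m 𝕜} (hM : IsUnit M.det) {c : 𝕜} (hc : c ≠ 0) (a b : 𝕜)
    (K L : Matrix m m 𝕜) : (a • K) * (c • M)⁻¹ * (b • L) = (a * b / c) • (K * M⁻¹ * L) := by
  let := invertibleOfNonzero hc
  rw [Matrix.inv_smul (k := c) (h := hM), invOf_eq_inv, smul_mul_smul_comm, smul_mul_smul_comm,
    div_eq_mul_inv, mul_right_comm]

/-- With `A = β M`, `B = κ K`, `C = α⁻¹ M` (for `M`, `K` symmetric positive definite and
`α, β, κ > 0`), the second block of the interpolation preconditioner at `θ = 1/2` is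
`C + [C, B A⁻¹ Bᵀ]_{1/2} = α⁻¹ M + (α β)^{-1/2} κ K`, and this equals
`(α β)⁻¹ (β M + (α β)^{1/2} κ K)`, i.e. `(α β)⁻¹` times the first block
`A + [A, Bᵀ C⁻¹ B]_{1/2}`. -/
theorem second_preconditioner_block {n : ℕ} (M K : Matrix (Fin n) (Fin n) ℝ)
    (hM : M.PosDef) (hK : K.PosDef) (α β κ : ℝ) (hα : 0 < α) (hβ : 0 < β) (hκ : 0 < κ)
    (A B C : Matrix (Fin n) (Fin n) ℝ)
    (hA : A = β • M) (hB : B = κ • K) (hC : C = α⁻¹ • M) :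
    C + interp C (B * A⁻¹ * Bᵀ) (1 / 2) =
        α⁻¹ • M + ((α * β) ^ (-(1 : ℝ) / 2) * κ) • K ∧
    C + interp C (B * A⁻¹ * Bᵀ) (1 / 2) =
        (α * β)⁻¹ • (β • M + ((α * β) ^ ((1 : ℝ) / 2) * κ) • K) ∧
    C + interp C (B * A⁻¹ * Bᵀ) (1 / 2) =
        (α * β)⁻¹ • (A + interp A (Bᵀ * C⁻¹ * B) (1 / 2)) := by
  subst hA hB hC
  set s := (α * β) ^ ((1 : ℝ) / 2)
  have hs : 0 < s := by positivity
  have hss : s * s = α * β := by rw [← Real.rpow_add (by positivity)]; norm_num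
  have hs_neg : (α * β) ^ (-(1 : ℝ) / 2) = s⁻¹ := by rw [neg_div, Real.rpow_neg (by positivity)]
  have hKt : Kᵀ = K := by rw [← conjTranspose_eq_transpose_of_trivial, hK.isHermitian.eq]
  have hMdet : IsUnit M.det := (isUnit_iff_isUnit_det M).1 hM.isUnit
  have hsecond : interp (α⁻¹ • M) (κ • K * (β • M)⁻¹ * (κ • K)ᵀ) (1 / 2) = (s⁻¹ * κ) • K := by
    convert interp_half_mul_inv_mul (hM.smul (inv_pos.2 hα))
      (hK.posSemidef.smul (by positivity : 0 ≤ s⁻¹ * κ)) using 2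
    rw [transpose_smul, hKt, smul_mul_inv_smul_mul_smul hMdet hβ.ne',
      smul_mul_inv_smul_mul_smul hMdet (inv_ne_zero hα.ne')]
    congr 1
    field_simp
    linear_combination hss
  have hfirst : interp (β • M) ((κ • K)ᵀ * (α⁻¹ • M)⁻¹ * (κ • K)) (1 / 2) = (s * κ) • K := by
    convert interp_half_mul_inv_mul (hM.smul hβ)
      (hK.posSemidef.smul (by positivity : 0 ≤ s * κ)) using 2
    rw [transpose_smul, hKt, smul_mul_inv_smul_mul_smul hMdet hβ.ne',
      smul_mul_inv_smul_mul_smul hMdet (inv_ne_zero hα.ne')]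
    congr 1
    field_simp
    linear_combination -hss
  have hblocks : α⁻¹ • M + (s⁻¹ * κ) • K = (α * β)⁻¹ • (β • M + (s * κ) • K) := by
    match_scalars
    · field_simp
    · field_simp
      linear_combination -hss
  exact ⟨by rw [hsecond, hs_neg], by rw [hsecond, hblocks], by rw [hsecond, hfirst, hblocks]⟩
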